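/- Let F consist of the 4-cycle together with all graphs formed by two 3-cycles at distance at most 1. Let G be a graph containing no graph of F as a subgraph, and let v be a d-vertex of G adjacent to exactly d−2 vertices of degree 3, such that v lies on a 3-cycle w1w2w3 or is adjacent to a vertex of a 3-cycle w1w2w3. Then the subgraph H of G induced by A ∪ {v} ∪ {w1,w2,w3}, where A is the set of degree-3 neighbors of v, is (F,4)-boundary-reducible with boundary B = V(H) \ (A ∪ {v}). -/

import Mathlib

open Finset

/-- A proper coloring of `G` from the lists `L`. -/
def IsProperListColoring {V : Type} (G : SimpleGraph V) (L : V → Finset ℕ) (φ : V → ℕ) : Prop :=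
  (∀ v, φ v ∈ L v) ∧ ∀ ⦃u v : V⦄, G.Adj u v → φ u ≠ φ v

/-- `G` is weighted `ε`-flexible for lists of size `k`. -/
def WeightedFlexible {V : Type} [Fintype V] (G : SimpleGraph V) (k : ℕ) (ε : ℝ) : Prop :=
  ∀ L : V → Finset ℕ, (∀ v, k ≤ (L v).card) →
    ∀ w : V → ℕ → ℝ, (∀ v c, 0 ≤ w v c) → (∀ v c, c ∉ L v → w v c = 0) →
      ∃ φ : V → ℕ, IsProperListColoring G L φ ∧
        ε * (∑ v, ∑ c ∈ L v, w v c) ≤ ∑ v, w v (φ v)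

/-- `G` is weakly `ε`-flexible for lists of size `k`. -/
def WeaklyFlexible {V : Type} [Fintype V] (G : SimpleGraph V) (k : ℕ) (ε : ℝ) : Prop :=
  ∀ L : V → Finset ℕ, (∀ v, k ≤ (L v).card) →
    ∀ r : V → ℕ, (∀ v, r v ∈ L v) →
      ∃ φ : V → ℕ, IsProperListColoring G L φ ∧
        ε * (Fintype.card V : ℝ) ≤ ((Finset.univ.filter fun v => φ v = r v).card : ℝ)

/-- `G` has a drawing in the plane: vertices go to distinct points, edges to simple
continuous arcs joining their endpoints, arcs internally avoid vertices and each other. -/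
def HasPlanarEmbedding {V : Type} (G : SimpleGraph V) : Prop :=
  ∃ (pos : V → ℝ × ℝ) (γ : Sym2 V → ℝ → ℝ × ℝ),
    Function.Injective pos ∧
    (∀ e ∈ G.edgeSet, ContinuousOn (γ e) (Set.Icc 0 1)) ∧
    (∀ e ∈ G.edgeSet, Set.InjOn (γ e) (Set.Icc 0 1)) ∧
    (∀ u v : V, G.Adj u v → ({γ s(u, v) 0, γ s(u, v) 1} : Set (ℝ × ℝ)) = {pos u, pos v}) ∧
    (∀ e ∈ G.edgeSet, ∀ t ∈ Set.Ioo (0 : ℝ) 1, γ e t ∉ Set.range pos) ∧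
    (∀ e ∈ G.edgeSet, ∀ f ∈ G.edgeSet, e ≠ f →
      ∀ s ∈ Set.Ioo (0 : ℝ) 1, ∀ t ∈ Set.Ioo (0 : ℝ) 1, γ e s ≠ γ f t)

/-- `G` contains a copy of the graph `p.2` as a (not necessarily induced) subgraph. -/
def ContainsCopy {V : Type} (G : SimpleGraph V) (p : (W : Type) × SimpleGraph W) : Prop :=
  ∃ f : p.2 →g G, Function.Injective f

/-- `K₄` minus an edge (the diamond). -/
def diamondGraph : SimpleGraph (Fin 4) :=
  SimpleGraph.fromEdgeSet {s(0, 1), s(0, 2), s(0, 3), s(1, 2), s(1, 3)}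

/-- The house: a `3`-cycle `0 1 4` and a `4`-cycle `0 1 2 3` sharing the edge `01`. -/
def houseGraph : SimpleGraph (Fin 5) :=
  SimpleGraph.fromEdgeSet {s(0, 1), s(1, 2), s(2, 3), s(3, 0), s(0, 4), s(1, 4)}

/-- Two triangles sharing exactly one vertex. -/
def bowtieGraph : SimpleGraph (Fin 5) :=
  SimpleGraph.fromEdgeSet {s(0, 1), s(1, 2), s(0, 2), s(0, 3), s(3, 4), s(0, 4)}

/-- Two disjoint triangles joined by an edge. -/
def twoTrianglesEdgeGraph : SimpleGraph (Fin 6) :=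
  SimpleGraph.fromEdgeSet {s(0, 1), s(1, 2), s(0, 2), s(3, 4), s(4, 5), s(3, 5), s(0, 3)}

def IsTriangle {V : Type} (G : SimpleGraph V) (a b c : V) : Prop :=
  G.Adj a b ∧ G.Adj b c ∧ G.Adj a c

/-- Any two distinct `3`-cycles of `G` are at distance at least `2`. -/
def TrianglesFarApart {V : Type} (G : SimpleGraph V) : Prop :=
  ∀ a b c a' b' c' : V, IsTriangle G a b c → IsTriangle G a' b' c' →
    ({a, b, c} : Set V) ≠ ({a', b', c'} : Set V) →
    ∀ x ∈ ({a, b, c} : Set V), ∀ y ∈ ({a', b', c'} : Set V), x ≠ y ∧ ¬ G.Adj x y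

/-- Every nonempty (induced) subgraph of `G` has a vertex of degree at most `d`. -/
def Degenerate {V : Type} (G : SimpleGraph V) [DecidableRel G.Adj] (d : ℕ) : Prop :=
  ∀ S : Finset V, S.Nonempty → ∃ v ∈ S, (S.filter fun w => G.Adj v w).card ≤ d

/-- The degree of `v` into the set `A`. -/
def degIn {V : Type} (G : SimpleGraph V) [DecidableRel G.Adj] (A : Finset V) (v : V) : ℕ :=
  (A.filter fun w => G.Adj v w).card

/-- The graph induced by `G` on `T` is colorable from every list assignment
with list sizes at least `f`. -/
def ColorableOn {V : Type} (G : SimpleGraph V) (T : Finset V) (f : V → ℤ) : Prop :=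
  ∀ L : V → Finset ℕ, (∀ v ∈ T, f v ≤ ((L v).card : ℤ)) →
    ∃ φ : V → ℕ, (∀ v ∈ T, φ v ∈ L v) ∧ ∀ u ∈ T, ∀ v ∈ T, G.Adj u v → φ u ≠ φ v

/-- The subgraph of `G` induced on `S`, together with one additional vertex
adjacent exactly to the vertices of `I`. -/
def apexGraph {V : Type} (G : SimpleGraph V) (S I : Finset V) :
    SimpleGraph ({x // x ∈ S} ⊕ Unit) where
  Adj x y :=
    match x, y with
    | Sum.inl a, Sum.inl b => G.Adj a.1 b.1
    | Sum.inl a, Sum.inr _ => a.1 ∈ I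
    | Sum.inr _, Sum.inl b => b.1 ∈ I
    | Sum.inr _, Sum.inr _ => False
  symm := ⟨by
    rintro (a | a) (b | b) h
    · exact G.adj_symm h
    · exact h
    · exact h
    · exact h⟩
  loopless := ⟨by
    rintro (a | a) h
    · exact G.irrefl h
    · exact h⟩

/-- `I ⊆ S` is `F`-forbidding (for the subgraph of `G` induced on `S`):
the induced subgraph plus an apex over `I` contains no member of `F` as a subgraph. -/
def Forbidding {V : Type} (F : Set ((W : Type) × SimpleGraph W)) (G : SimpleGraph V)
    (S I : Finset V) : Prop :=
  ∀ p ∈ F, ¬ ContainsCopy (apexGraph G S I) p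

/-- The subgraph of `G` induced on `S` is `(F,k)`-boundary-reducible with boundary `B`,
inside the ambient induced subgraph of `G` on `A` (degrees `deg_G` are measured in `A`). -/
def BoundaryReducibleIn {V : Type} [DecidableEq V] (F : Set ((W : Type) × SimpleGraph W))
    (k : ℕ) (G : SimpleGraph V) [DecidableRel G.Adj] (A S B : Finset V) : Prop :=
  S ⊆ A ∧ B ⊂ S ∧
  (∀ v ∈ S \ B, ColorableOn G (S \ B)
      (Function.update (fun w => (k : ℤ) - degIn G A w + degIn G (S \ B) w) v 1)) ∧
  (∀ I : Finset V, I ⊆ S \ B → (I.card : ℤ) ≤ (k : ℤ) - 2 → Forbidding F G S I →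
    ColorableOn G (S \ B)
      (fun w => (k : ℤ) - degIn G A w + degIn G (S \ B) w - if w ∈ I then 1 else 0))

/-- Weak `(F,k)`-boundary-reducibility, witnessed by the set `Fx = Fix(H)`. -/
def WeakBoundaryReducibleInWith {V : Type} [DecidableEq V]
    (F : Set ((W : Type) × SimpleGraph W)) (k : ℕ) (G : SimpleGraph V) [DecidableRel G.Adj]
    (A S B Fx : Finset V) : Prop :=
  S ⊆ A ∧ B ⊂ S ∧ Fx.Nonempty ∧ Fx ⊆ S \ B ∧
  (∀ v ∈ Fx, ColorableOn G (S \ B)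
      (Function.update (fun w => (k : ℤ) - degIn G A w + degIn G (S \ B) w) v 1)) ∧
  (∀ I : Finset V, I ⊆ S \ B → (I.card : ℤ) ≤ (k : ℤ) - 2 → Forbidding F G S I →
    ColorableOn G (S \ B)
      (fun w => (k : ℤ) - degIn G A w + degIn G (S \ B) w - if w ∈ I then 1 else 0))

/-- An `(F,k,b)`-resolution of `G`: nested induced subgraphs `G_i` of `G` on the vertex
sets `A i`, where `G_i` is obtained from `G_{i-1}` by deleting `H_i - B_i` for an induced
`(F,k)`-boundary-reducible subgraph `H_i` (on vertex set `S i`) of `G_{i-1}`,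
and the last graph `G_M` is itself reducible with empty boundary and has at most `b` vertices. -/
structure Resolution {V : Type} [Fintype V] [DecidableEq V]
    (F : Set ((W : Type) × SimpleGraph W)) (k b : ℕ)
    (G : SimpleGraph V) [DecidableRel G.Adj] where
  M : ℕ
  S : ℕ → Finset V
  B : ℕ → Finset V
  A : ℕ → Finset V
  hA0 : A 0 = Finset.univ
  hAstep : ∀ i, 1 ≤ i → i ≤ M → A i = A (i - 1) \ (S i \ B i)
  avoid : ∀ p ∈ F, ¬ ContainsCopy G p
  red : ∀ i, 1 ≤ i → i ≤ M → BoundaryReducibleIn F k G (A (i - 1)) (S i) (B i)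
  size : ∀ i, 1 ≤ i → i ≤ M → (S i \ B i).card ≤ b
  last : BoundaryReducibleIn F k G (A M) (A M) ∅
  lastsize : (A M).card ≤ b

/-- A weak `(F,k,b)`-resolution of `G`; `Fx i` is the set `Fix(H_i)` for the `i`-th
reducible subgraph (`1 ≤ i ≤ M`), and `Fx 0` is the `Fix` set of the last graph `G_M`. -/
structure WeakResolution {V : Type} [Fintype V] [DecidableEq V]
    (F : Set ((W : Type) × SimpleGraph W)) (k b : ℕ)
    (G : SimpleGraph V) [DecidableRel G.Adj] where
  M : ℕ
  S : ℕ → Finset V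
  B : ℕ → Finset V
  A : ℕ → Finset V
  Fx : ℕ → Finset V
  hA0 : A 0 = Finset.univ
  hAstep : ∀ i, 1 ≤ i → i ≤ M → A i = A (i - 1) \ (S i \ B i)
  avoid : ∀ p ∈ F, ¬ ContainsCopy G p
  red : ∀ i, 1 ≤ i → i ≤ M → WeakBoundaryReducibleInWith F k G (A (i - 1)) (S i) (B i) (Fx i)
  size : ∀ i, 1 ≤ i → i ≤ M → (S i \ B i).card ≤ b
  last : WeakBoundaryReducibleInWith F k G (A M) (A M) ∅ (Fx 0)
  lastsize : (A M).card ≤ b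

/-- `Fix(G)`: the union of the `Fix` sets of the reducible subgraphs of the resolution. -/
def WeakResolution.FixG {V : Type} [Fintype V] [DecidableEq V]
    {F : Set ((W : Type) × SimpleGraph W)} {k b : ℕ}
    {G : SimpleGraph V} [DecidableRel G.Adj] (R : WeakResolution F k b G) : Finset V :=
  (Finset.range (R.M + 1)).biUnion R.Fx

def F12 : Set ((W : Type) × SimpleGraph W) :=
  {⟨Fin 4, SimpleGraph.cycleGraph 4⟩, ⟨Fin 4, diamondGraph⟩,
    ⟨Fin 5, bowtieGraph⟩, ⟨Fin 6, twoTrianglesEdgeGraph⟩}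

/-!
`H - B` is the star on `v` and its degree-`3` neighbours `A`, so the list sizes
`4 - deg_G + deg_{H-B}` are `deg_{H-B}(u) + 1` on `u ∈ A` and exactly `2` on `v`
(as `deg v = |A| + 2`). Colouring the fixed vertex first, then `v`, then the rest of `A`
greedily proves (FIX).

For (FORB): if `I` contained `v` and a neighbour `y`, the new vertex would close a triangle
`v y x` at distance at most one from `w1 w2 w3`, giving a diamond, a bowtie or two triangles
joined by an edge; two neighbours of `v` in `I` give a `4`-cycle through the new vertex.
So `I` is `∅`, `{v}` or `{u}` with `u ∈ A`; in the last case `u` keeps `deg_{H-B}(u) ≥ 1`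
colours and `v` keeps two, so the same greedy orders apply.
-/

section Copies

variable {W V : Type} {G : SimpleGraph V}

lemma containsCopy_fromEdgeSet {s : Set (Sym2 W)} {f : W → V} (hf : Function.Injective f)
    (hs : ∀ e ∈ s, ¬ e.IsDiag → e.map f ∈ G.edgeSet) :
    ContainsCopy G ⟨W, SimpleGraph.fromEdgeSet s⟩ := by
  refine ⟨⟨f, fun {a b} hab => ?_⟩, hf⟩
  rw [SimpleGraph.fromEdgeSet_adj] at hab
  exact hs _ hab.1 (by simpa using hab.2)

lemma cycleGraph_four_eq_fromEdgeSet :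
    SimpleGraph.cycleGraph 4 = SimpleGraph.fromEdgeSet {s(0, 1), s(1, 2), s(2, 3), s(3, 0)} := by
  ext i j
  rw [SimpleGraph.cycleGraph_adj, SimpleGraph.fromEdgeSet_adj]
  fin_cases i <;> fin_cases j <;> simp <;> decide

lemma containsCopy_cycleGraph_four {a b c d : V} (hab : G.Adj a b) (hbc : G.Adj b c)
    (hcd : G.Adj c d) (hda : G.Adj d a) (hac : a ≠ c) (hbd : b ≠ d) :
    ContainsCopy G ⟨Fin 4, SimpleGraph.cycleGraph 4⟩ := by
  rw [cycleGraph_four_eq_fromEdgeSet]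
  refine containsCopy_fromEdgeSet (f := ![a, b, c, d]) ?_ (by simp [*])
  rw [← List.nodup_ofFn]
  simp [hab.ne, hbc.ne, hcd.ne, hda.ne', hac, hbd]

lemma containsCopy_diamondGraph {a b c d : V} (hab : G.Adj a b) (hac : G.Adj a c)
    (had : G.Adj a d) (hbc : G.Adj b c) (hbd : G.Adj b d) (hcd : c ≠ d) :
    ContainsCopy G ⟨Fin 4, diamondGraph⟩ := by
  refine containsCopy_fromEdgeSet (f := ![a, b, c, d]) ?_ (by simp [*])
  rw [← List.nodup_ofFn]
  simp [hab.ne, hac.ne, had.ne, hbc.ne, hbd.ne, hcd]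

lemma containsCopy_bowtieGraph {a b c d e : V} (hab : G.Adj a b) (hbc : G.Adj b c)
    (hac : G.Adj a c) (had : G.Adj a d) (hde : G.Adj d e) (hae : G.Adj a e)
    (hbd : b ≠ d) (hbe : b ≠ e) (hcd : c ≠ d) (hce : c ≠ e) :
    ContainsCopy G ⟨Fin 5, bowtieGraph⟩ := by
  refine containsCopy_fromEdgeSet (f := ![a, b, c, d, e]) ?_ (by simp [*])
  rw [← List.nodup_ofFn]
  simp [hab.ne, hbc.ne, hac.ne, had.ne, hde.ne, hae.ne, *]

lemma containsCopy_twoTrianglesEdgeGraph {a b c d e f : V} (hab : G.Adj a b) (hbc : G.Adj b c)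
    (hac : G.Adj a c) (hde : G.Adj d e) (hef : G.Adj e f) (hdf : G.Adj d f) (had : G.Adj a d)
    (hae : a ≠ e) (haf : a ≠ f) (hbd : b ≠ d) (hbe : b ≠ e) (hbf : b ≠ f) (hcd : c ≠ d)
    (hce : c ≠ e) (hcf : c ≠ f) :
    ContainsCopy G ⟨Fin 6, twoTrianglesEdgeGraph⟩ := by
  refine containsCopy_fromEdgeSet (f := ![a, b, c, d, e, f]) ?_ (by simp [*])
  rw [← List.nodup_ofFn]
  simp [hab.ne, hbc.ne, hac.ne, hde.ne, hef.ne, hdf.ne, had.ne, *]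

end Copies

section Triangles

variable {V : Type} [DecidableEq V] {G : SimpleGraph V}

lemma IsTriangle.isNClique {a b c : V} (h : IsTriangle G a b c) : G.IsNClique 3 {a, b, c} :=
  SimpleGraph.is3Clique_triple_iff.2 ⟨h.1, h.2.2, h.2.1⟩

lemma SimpleGraph.IsNClique.exists_eq_triple_of_mem {t : Finset V} {z : V}
    (ht : G.IsNClique 3 t) (hz : z ∈ t) :
    ∃ p q, t = {z, p, q} ∧ G.Adj z p ∧ G.Adj z q ∧ G.Adj p q := by
  obtain ⟨p, q, hpq, hpq_eq⟩ := Finset.card_eq_two.1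
    (by rw [card_erase_of_mem hz, ht.card_eq])
  have hp : p ∈ t.erase z := by simp [hpq_eq]
  have hq : q ∈ t.erase z := by simp [hpq_eq]
  refine ⟨p, q, by rw [← hpq_eq, insert_erase hz], ?_, ?_, ?_⟩
  · exact ht.1 hz (mem_of_mem_erase hp) (ne_of_mem_erase hp).symm
  · exact ht.1 hz (mem_of_mem_erase hq) (ne_of_mem_erase hq).symm
  · exact ht.1 (mem_of_mem_erase hp) (mem_of_mem_erase hq) hpq

end Triangles

section Forbidding

variable {V : Type} {G : SimpleGraph V} {S I : Finset V}

lemma not_forbidding_of_two_neighbors_mem {v u u' : V} (hvS : v ∈ S) (huS : u ∈ S)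
    (hu'S : u' ∈ S) (huI : u ∈ I) (hu'I : u' ∈ I) (hvu : G.Adj v u) (hvu' : G.Adj v u')
    (hne : u ≠ u') : ¬ Forbidding F12 G S I := fun hforb =>
  hforb _ (by simp [F12]) <| containsCopy_cycleGraph_four (G := apexGraph G S I)
    (a := .inr ()) (b := .inl ⟨u, huS⟩) (c := .inl ⟨v, hvS⟩) (d := .inl ⟨u', hu'S⟩)
    huI hvu.symm hvu' hu'I Sum.inr_ne_inl (by simpa using hne)

variable [DecidableEq V]

lemma not_forbidding_of_adj_near_triangle {t : Finset V} {v y : V} (ht : G.IsNClique 3 t)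
    (htS : t ⊆ S) (hvS : v ∈ S) (hyS : y ∈ S) (hvI : v ∈ I) (hyI : y ∈ I)
    (hvy : G.Adj v y)
    (hnear : v ∈ t ∨ ∃ a ∈ t, G.Adj v a) : ¬ Forbidding F12 G S I := by
  intro hforb
  by_cases hvt : v ∈ t
  · obtain ⟨p, q, rfl, hvp, hvq, hpq⟩ := ht.exists_eq_triple_of_mem hvt
    have hpS : p ∈ S := htS (by simp)
    have hqS : q ∈ S := htS (by simp)
    by_cases hyt : y = p ∨ y = q
    · obtain ⟨w, hwS, hvw, hyw⟩ : ∃ w ∈ S, G.Adj v w ∧ G.Adj y w := by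
        rcases hyt with rfl | rfl
        exacts [⟨q, hqS, hvq, hpq⟩, ⟨p, hpS, hvp, hpq.symm⟩]
      exact hforb _ (by simp [F12]) <| containsCopy_diamondGraph (G := apexGraph G S I)
        (a := .inl ⟨v, hvS⟩) (b := .inl ⟨y, hyS⟩) (c := .inr ()) (d := .inl ⟨w, hwS⟩)
        hvy hvI hvw hyI hyw Sum.inr_ne_inl
    · push Not at hyt
      exact hforb _ (by simp [F12]) <| containsCopy_bowtieGraph (G := apexGraph G S I)
        (a := .inl ⟨v, hvS⟩) (b := .inl ⟨y, hyS⟩) (c := .inr ()) (d := .inl ⟨p, hpS⟩)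
        (e := .inl ⟨q, hqS⟩) hvy hyI hvI hvp hpq hvq (by simpa using hyt.1)
        (by simpa using hyt.2) Sum.inr_ne_inl Sum.inr_ne_inl
  by_cases hyt : y ∈ t
  · obtain ⟨p, q, rfl, hyp, hyq, hpq⟩ := ht.exists_eq_triple_of_mem hyt
    have hpS : p ∈ S := htS (by simp)
    have hqS : q ∈ S := htS (by simp)
    simp only [mem_insert, mem_singleton, not_or] at hvt
    exact hforb _ (by simp [F12]) <| containsCopy_bowtieGraph (G := apexGraph G S I)
      (a := .inl ⟨y, hyS⟩) (b := .inl ⟨v, hvS⟩) (c := .inr ()) (d := .inl ⟨p, hpS⟩)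
      (e := .inl ⟨q, hqS⟩) hvy.symm hvI hyI hyp hpq hyq (by simpa using hvt.2.1)
      (by simpa using hvt.2.2) Sum.inr_ne_inl Sum.inr_ne_inl
  obtain ⟨a, hat, hva⟩ := hnear.resolve_left hvt
  obtain ⟨p, q, rfl, hap, haq, hpq⟩ := ht.exists_eq_triple_of_mem hat
  have haS : a ∈ S := htS (by simp)
  have hpS : p ∈ S := htS (by simp)
  have hqS : q ∈ S := htS (by simp)
  simp only [mem_insert, mem_singleton, not_or] at hvt hyt
  exact hforb _ (by simp [F12]) <| containsCopy_twoTrianglesEdgeGraph (G := apexGraph G S I)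
    (a := .inl ⟨v, hvS⟩) (b := .inl ⟨y, hyS⟩) (c := .inr ()) (d := .inl ⟨a, haS⟩)
    (e := .inl ⟨p, hpS⟩) (f := .inl ⟨q, hqS⟩) hvy hyI hvI hap hpq haq hva
    (by simpa using hvt.2.1) (by simpa using hvt.2.2) (by simpa using hyt.1)
    (by simpa using hyt.2.1) (by simpa using hyt.2.2) Sum.inr_ne_inl Sum.inr_ne_inl
    Sum.inr_ne_inl

lemma subset_singleton_or_eq_singleton_of_forbidding {v : V} {A t : Finset V}
    (hadj : ∀ u ∈ A, G.Adj v u)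
    (hAS : insert v A ⊆ S) (ht : G.IsNClique 3 t) (htS : t ⊆ S)
    (hnear : v ∈ t ∨ ∃ a ∈ t, G.Adj v a) (hI : I ⊆ insert v A)
    (hforb : Forbidding F12 G S I) : I ⊆ {v} ∨ ∃ u ∈ A, I = {u} := by
  have hvS := hAS (mem_insert_self v A)
  have hAS' : ∀ u ∈ A, u ∈ S := fun u hu => hAS (mem_insert_of_mem hu)
  by_cases hvI : v ∈ I
  · refine Or.inl fun y hyI => ?_
    by_contra hyv
    have hyA : y ∈ A := (mem_insert.1 (hI hyI)).resolve_left (by simpa using hyv)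
    exact not_forbidding_of_adj_near_triangle ht htS hvS (hAS' y hyA) hvI hyI (hadj y hyA)
      hnear hforb
  have hIA : I ⊆ A := fun y hy =>
    (mem_insert.1 (hI hy)).resolve_left fun hyv => hvI (hyv ▸ hy)
  rcases I.eq_empty_or_nonempty with rfl | ⟨u, hu⟩
  · exact Or.inl (empty_subset _)
  refine Or.inr ⟨u, hIA hu, eq_singleton_iff_unique_mem.2 ⟨hu, fun u' hu' => ?_⟩⟩
  by_contra hne
  exact not_forbidding_of_two_neighbors_mem hvS (hAS' u' (hIA hu')) (hAS' u (hIA hu)) hu' hu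
    (hadj u' (hIA hu')) (hadj u (hIA hu)) hne hforb

end Forbidding

section ListColoring

variable {V : Type}

def IsListColoringOn (G : SimpleGraph V) (T : Finset V) (L : V → Finset ℕ) (φ : V → ℕ) :
    Prop :=
  (∀ v ∈ T, φ v ∈ L v) ∧ ∀ u ∈ T, ∀ w ∈ T, G.Adj u w → φ u ≠ φ w

variable {G : SimpleGraph V} {L : V → Finset ℕ}

lemma isListColoringOn_singleton {v : V} {c : ℕ} (hc : c ∈ L v) :
    IsListColoringOn G {v} L fun _ => c :=
  ⟨by simpa using hc, by simp⟩

variable [DecidableRel G.Adj]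

lemma degIn_mono {s t : Finset V} (h : s ⊆ t) (v : V) : degIn G s v ≤ degIn G t v :=
  card_le_card (filter_subset_filter _ h)

variable [DecidableEq V] {T : Finset V} {φ : V → ℕ}

lemma IsListColoringOn.exists_insert (hφ : IsListColoringOn G T L φ) {a : V}
    (ha : degIn G T a < (L a).card) : ∃ ψ, IsListColoringOn G (insert a T) L ψ := by
  obtain ⟨c, hcL, hc⟩ := exists_mem_notMem_of_card_lt_card
    (card_image_le.trans_lt ha : ((T.filter (G.Adj a)).image φ).card < (L a).card)
  have hfree : ∀ x ∈ T, G.Adj a x → c ≠ φ x := fun x hx hax hcx =>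
    hc (mem_image.2 ⟨x, mem_filter.2 ⟨hx, hax⟩, hcx.symm⟩)
  refine ⟨Function.update φ a c, fun u hu => ?_, fun u hu w hw huw => ?_⟩
  · rcases eq_or_ne u a with rfl | hua
    · simpa using hcL
    · simpa [hua] using hφ.1 u ((mem_insert.1 hu).resolve_left hua)
  have hu' := mem_insert.1 hu
  have hw' := mem_insert.1 hw
  by_cases hua : u = a <;> by_cases hwa : w = a
  · exact absurd (hwa ▸ hua ▸ huw) (G.irrefl)
  · subst hua
    simpa [hwa] using hfree w (hw'.resolve_left hwa) huw
  · subst hwa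
    simpa [hua] using (hfree u (hu'.resolve_left hua) huw.symm).symm
  · simpa [hua, hwa] using hφ.2 u (hu'.resolve_left hua) w (hw'.resolve_left hwa) huw

lemma IsListColoringOn.exists_union (hφ : IsListColoringOn G T L φ) {R : Finset V}
    (hR : ∀ u ∈ R, degIn G (T ∪ R) u < (L u).card) :
    ∃ ψ, IsListColoringOn G (T ∪ R) L ψ := by
  induction R using Finset.induction_on with
  | empty => exact ⟨φ, by simpa using hφ⟩
  | insert a R _ ih =>
    have hsub : T ∪ R ⊆ T ∪ insert a R := union_subset_union_right (subset_insert a R)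
    obtain ⟨ψ, hψ⟩ := ih fun u hu =>
      (degIn_mono hsub u).trans_lt (hR u (mem_insert_of_mem hu))
    rw [union_insert]
    exact hψ.exists_insert ((degIn_mono hsub a).trans_lt (hR a (mem_insert_self a R)))

lemma exists_isListColoringOn_insert {v : V} {A : Finset V} (hv : (L v).Nonempty)
    (hA : ∀ u ∈ A, degIn G (insert v A) u < (L u).card) :
    ∃ φ, IsListColoringOn G (insert v A) L φ := by
  obtain ⟨c, hc⟩ := hv
  rw [insert_eq] at hA ⊢
  exact (isListColoringOn_singleton hc).exists_union hA

lemma exists_isListColoringOn_insert_of_mem {v u₀ : V} {A : Finset V} (hu₀ : u₀ ∈ A)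
    (hLu₀ : (L u₀).Nonempty) (hLv : 2 ≤ (L v).card)
    (hA : ∀ u ∈ A, u ≠ u₀ → degIn G (insert v A) u < (L u).card) :
    ∃ φ, IsListColoringOn G (insert v A) L φ := by
  obtain ⟨c, hc⟩ := hLu₀
  have hT : insert v A = insert v {u₀} ∪ A.erase u₀ := by
    rw [insert_union, ← insert_eq, insert_erase hu₀]
  have hv : degIn G {u₀} v < (L v).card :=
    (card_filter_le _ _).trans_lt (by rw [card_singleton]; exact hLv)
  obtain ⟨φ, hφ⟩ := (isListColoringOn_singleton hc).exists_insert hv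
  rw [hT] at hA ⊢
  exact hφ.exists_union fun u hu => hA u (by simp [(mem_erase.1 hu).2]) (mem_erase.1 hu).1

end ListColoring

section Star

variable {V : Type} [Fintype V] {G : SimpleGraph V} [DecidableRel G.Adj]

lemma degIn_univ (w : V) : degIn G univ w = G.degree w := by
  rw [SimpleGraph.degree, SimpleGraph.neighborFinset_eq_filter]
  rfl

variable [DecidableEq V] {v : V} {A : Finset V}

omit [Fintype V] in
lemma degIn_insert_self (hadj : ∀ u ∈ A, G.Adj v u) : degIn G (insert v A) v = A.card := by
  rw [degIn, filter_insert, if_neg (G.irrefl), filter_true_of_mem hadj]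

lemma four_sub_degIn_univ_add_degIn_insert_self (hadj : ∀ u ∈ A, G.Adj v u)
    (hcard : A.card + 2 = G.degree v) :
    (4 : ℤ) - degIn G univ v + degIn G (insert v A) v = 2 := by
  rw [degIn_univ, ← hcard, degIn_insert_self hadj]
  push_cast
  ring

variable (hadj : ∀ u ∈ A, G.Adj v u) (hdeg : ∀ u ∈ A, G.degree u = 3)
  (hcard : A.card + 2 = G.degree v)
include hadj hdeg hcard

lemma colorableOn_insert_update_one {x : V} (hx : x ∈ insert v A) :
    ColorableOn G (insert v A)
      (Function.update (fun w => (4 : ℤ) - degIn G univ w + degIn G (insert v A) w) x 1) := by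
  intro L hL
  have hleaf : ∀ u ∈ A, u ≠ x → degIn G (insert v A) u < (L u).card := fun u hu hux => by
    have h := hL u (mem_insert_of_mem hu)
    rw [Function.update_of_ne hux, degIn_univ, hdeg u hu] at h
    omega
  have hLx : (L x).Nonempty := card_pos.1 (by simpa using hL x hx)
  rcases mem_insert.1 hx with rfl | hxA
  · exact exists_isListColoringOn_insert hLx fun u hu => hleaf u hu (hadj u hu).ne'
  refine exists_isListColoringOn_insert_of_mem hxA hLx ?_ hleaf
  have h := hL v (mem_insert_self v A)
  rw [Function.update_of_ne (hadj x hxA).ne,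
    four_sub_degIn_univ_add_degIn_insert_self hadj hcard] at h
  exact_mod_cast h

lemma colorableOn_insert_sub_ite {I : Finset V} (hI : I ⊆ {v} ∨ ∃ u ∈ A, I = {u}) :
    ColorableOn G (insert v A) fun w =>
      (4 : ℤ) - degIn G univ w + degIn G (insert v A) w - if w ∈ I then 1 else 0 := by
  intro L hL
  have hleaf : ∀ u ∈ A, u ∉ I → degIn G (insert v A) u < (L u).card := fun u hu huI => by
    have h := hL u (mem_insert_of_mem hu)
    dsimp only at h
    rw [if_neg huI, degIn_univ, hdeg u hu] at h
    omega
  have hv := hL v (mem_insert_self v A)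
  dsimp only at hv
  rw [four_sub_degIn_univ_add_degIn_insert_self hadj hcard] at hv
  rcases hI with hIv | ⟨u₀, hu₀, rfl⟩
  · refine exists_isListColoringOn_insert (card_pos.1 (by split_ifs at hv <;> omega))
      fun u hu => hleaf u hu fun huI => (hadj u hu).ne' (mem_singleton.1 (hIv huI))
  refine exists_isListColoringOn_insert_of_mem hu₀ ?_ ?_
    fun u hu hne => hleaf u hu (by simpa using hne)
  · have h := hL u₀ (mem_insert_of_mem hu₀)
    dsimp only at h
    have hvu₀ : 0 < degIn G (insert v A) u₀ :=
      card_pos.2 ⟨v, mem_filter.2 ⟨mem_insert_self v A, (hadj u₀ hu₀).symm⟩⟩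
    rw [if_pos (mem_singleton_self u₀), degIn_univ, hdeg u₀ hu₀] at h
    exact card_pos.1 (by omega)
  · rw [if_neg (by simpa using (hadj u₀ hu₀).ne)] at hv
    omega

end Star

theorem rc3_reducible_general {V : Type} [Fintype V] [DecidableEq V]
    (G : SimpleGraph V) [DecidableRel G.Adj]
    (v w1 w2 w3 : V)
    (htri : IsTriangle G w1 w2 w3)
    (hnear : v = w1 ∨ v = w2 ∨ v = w3 ∨ G.Adj v w1 ∨ G.Adj v w2 ∨ G.Adj v w3)
    (A : Finset V) (hA : A = (G.neighborFinset v).filter fun u => G.degree u = 3)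
    (hcard : A.card + 2 = G.degree v) :
    BoundaryReducibleIn F12 4 G Finset.univ (insert v A ∪ {w1, w2, w3})
      ((insert v A ∪ {w1, w2, w3}) \ insert v A) := by
  have hadj : ∀ u ∈ A, G.Adj v u := fun u hu => by
    rw [hA, mem_filter, SimpleGraph.mem_neighborFinset] at hu
    exact hu.1
  have hdeg : ∀ u ∈ A, G.degree u = 3 := fun u hu => by
    rw [hA, mem_filter] at hu
    exact hu.2
  have hAS : insert v A ⊆ insert v A ∪ {w1, w2, w3} := subset_union_left
  have hB := Finset.sdiff_sdiff_eq_self hAS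
  refine ⟨subset_univ _, sdiff_ssubset hAS (insert_nonempty v A), ?_, ?_⟩
  · rw [hB]
    exact fun x hx => colorableOn_insert_update_one hadj hdeg hcard hx
  · intro I hI _ hforb
    rw [hB] at hI ⊢
    refine colorableOn_insert_sub_ite hadj hdeg hcard
      (subset_singleton_or_eq_singleton_of_forbidding hadj hAS htri.isNClique subset_union_right
        ?_ hI hforb)
    simpa [or_assoc] using hnear

theorem rc3_reducible {V : Type} [Fintype V] [DecidableEq V]
    (G : SimpleGraph V) [DecidableRel G.Adj]
    (v w1 w2 w3 : V)
    (htri : IsTriangle G w1 w2 w3)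
    (hnear : v = w1 ∨ v = w2 ∨ v = w3 ∨ G.Adj v w1 ∨ G.Adj v w2 ∨ G.Adj v w3)
    (havoid : ∀ p ∈ F12, ¬ ContainsCopy G p)
    (A : Finset V) (hA : A = (G.neighborFinset v).filter fun u => G.degree u = 3)
    (hcard : A.card + 2 = G.degree v) :
    BoundaryReducibleIn F12 4 G Finset.univ (insert v A ∪ {w1, w2, w3})
      ((insert v A ∪ {w1, w2, w3}) \ insert v A) :=
  rc3_reducible_general G v w1 w2 w3 htri hnear A hA hcard
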